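/- arXiv:1604.00612 — 9 statements merged into one kernel-verified Lean document; each statement's English description precedes it below -/
import Mathlib

section
/- Let V be a finite type with Fintype.card V = n and let E : V → V → Prop be a relation with no directed cycles (¬ Relation.TransGen E v v for every v). Suppose every directed path in (V,E) has length at most ℓ (there is no directed path of length ℓ+1). Then the number of edges of (V,E) is at most t(n, ℓ+1), the number of edges of the Turán graph SimpleGraph.turanGraph n (ℓ+1). -/
/-- A directed path of length `k` in `(V, E)`: a map `p : Fin (k+1) → V` with
`E (p i) (p (i+1))` for all `i < k`. -/
def IsDirPath {V : Type*} (E : V → V → Prop) (k : ℕ) (p : Fin (k + 1) → V) : Prop :=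
  ∀ i : Fin k, E (p i.castSucc) (p i.succ)

/-- A directed path of length `k` from `v` to `w`. -/
def IsDirPathFromTo {V : Type*} (E : V → V → Prop) (k : ℕ) (p : Fin (k + 1) → V)
    (v w : V) : Prop :=
  p 0 = v ∧ p (Fin.last k) = w ∧ IsDirPath E k p

/-- The number of edges of `(V, E)`: the cardinality of the finset of pairs `(u, v)`
with `E u v`. -/
noncomputable def edgeCount {V : Type*} [Fintype V] (E : V → V → Prop) : ℕ :=
  letI := Classical.decPred fun p : V × V => E p.1 p.2
  (Finset.univ.filter fun p : V × V => E p.1 p.2).card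

/-- `t(n, r)`: the number of edges of the Turán graph `SimpleGraph.turanGraph n r`. -/
def turanEdges (n r : ℕ) : ℕ :=
  (SimpleGraph.turanGraph n r).edgeFinset.card

/-!
Let `h v` be the length of the longest directed path ending at `v`; it is at most `ℓ`, and
`h u < h v` whenever `E u v`, since a longest path ending at `u` extends by the edge (for
`h u = ℓ` this would give a path of length `ℓ + 1`). Hence `h` is a
proper `(ℓ + 1)`-colouring of the underlying simple graph, which is therefore `K_{ℓ+2}`-free,
and Turán's theorem bounds its number of edges, which equals that of `(V, E)` because `E` is
asymmetric.
-/

open Finset SimpleGraph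

section

variable {V : Type*} {E : V → V → Prop}

lemma IsDirPath.snoc {k : ℕ} {p : Fin (k + 1) → V} {v : V} (hp : IsDirPath E k p)
    (hv : E (p (Fin.last k)) v) : IsDirPath E (k + 1) (Fin.snoc p v) := by
  intro i
  induction i using Fin.lastCases with
  | last => simpa only [Fin.succ_last, Fin.snoc_castSucc, Fin.snoc_last] using hv
  | cast j => simpa only [Fin.succ_castSucc, Fin.snoc_castSucc] using hp j

section Height

open Classical

noncomputable def dirPathHeight (E : V → V → Prop) (ℓ : ℕ) (v : V) : ℕ :=
  Nat.findGreatest (fun k => ∃ p : Fin (k + 1) → V, IsDirPath E k p ∧ p (Fin.last k) = v) ℓ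

lemma dirPathHeight_le (ℓ : ℕ) (v : V) : dirPathHeight E ℓ v ≤ ℓ :=
  Nat.findGreatest_le ℓ

lemma exists_isDirPath_dirPathHeight (ℓ : ℕ) (v : V) :
    ∃ p : Fin (dirPathHeight E ℓ v + 1) → V,
      IsDirPath E (dirPathHeight E ℓ v) p ∧ p (Fin.last _) = v :=
  Nat.findGreatest_spec (P := fun k => ∃ p : Fin (k + 1) → V, IsDirPath E k p ∧
    p (Fin.last k) = v) (Nat.zero_le ℓ) ⟨fun _ => v, fun i => i.elim0, rfl⟩

lemma dirPathHeight_lt_of_rel {ℓ : ℕ} (hmax : ¬∃ p : Fin (ℓ + 1 + 1) → V, IsDirPath E (ℓ + 1) p)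
    {u v : V} (huv : E u v) : dirPathHeight E ℓ u < dirPathHeight E ℓ v := by
  obtain ⟨p, hp, hpu⟩ := exists_isDirPath_dirPathHeight (E := E) ℓ u
  have hext := hp.snoc (hpu ▸ huv)
  have hlt : dirPathHeight E ℓ u < ℓ :=
    (dirPathHeight_le ℓ u).lt_of_ne fun heq => hmax (heq ▸ ⟨_, hext⟩)
  exact Nat.lt_of_succ_le (Nat.le_findGreatest hlt ⟨_, hext, Fin.snoc_last _ _⟩)

end Height

lemma exists_rank_lt_of_not_isDirPath {ℓ : ℕ}
    (hmax : ¬∃ p : Fin (ℓ + 1 + 1) → V, IsDirPath E (ℓ + 1) p) :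
    ∃ f : V → Fin (ℓ + 1), ∀ u v, E u v → f u < f v :=
  ⟨fun v => ⟨dirPathHeight E ℓ v, Nat.lt_succ_of_le (dirPathHeight_le ℓ v)⟩,
    fun _ _ huv => dirPathHeight_lt_of_rel hmax huv⟩

lemma colorable_fromRel {r : ℕ} (f : V → Fin r) (hf : ∀ u v, E u v → f u ≠ f v) :
    (fromRel E).Colorable r :=
  ⟨Coloring.mk f fun {u v} huv => huv.2.elim (hf u v) fun hvu => (hf v u hvu).symm⟩

lemma edgeCount_eq_card_edgeFinset_fromRel [Fintype V] [DecidableRel (fromRel E).Adj]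
    (hE : ∀ u v, E u v → ¬E v u) : edgeCount E = #(fromRel E).edgeFinset := by
  rw [edgeCount]
  refine card_bij (fun p _ => s(p.1, p.2)) ?_ ?_ ?_
  · rintro ⟨u, v⟩ huv
    simp only [mem_filter, mem_univ, true_and] at huv
    simp only [mem_edgeFinset, mem_edgeSet, fromRel_adj]
    exact ⟨fun h => hE u v huv (h ▸ huv), Or.inl huv⟩
  · rintro ⟨a, b⟩ hab ⟨c, d⟩ hcd heq
    simp only [mem_filter, mem_univ, true_and] at hab hcd
    rcases Sym2.mk_eq_mk_iff.1 heq with heq | heq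
    · exact heq
    · obtain ⟨rfl, rfl⟩ := Prod.mk.inj heq
      exact (hE _ _ hab hcd).elim
  · intro e he
    induction e with
    | _ u v =>
      simp only [mem_edgeFinset, mem_edgeSet, fromRel_adj] at he
      rcases he.2 with huv | hvu
      · exact ⟨(u, v), by simpa using huv, rfl⟩
      · exact ⟨(v, u), by simpa using hvu, Sym2.eq_swap⟩

lemma SimpleGraph.CliqueFree.card_edgeFinset_le_turanEdges [Fintype V] {G : SimpleGraph V}
    [DecidableRel G.Adj] {r : ℕ} (hG : G.CliqueFree (r + 1)) :
    #G.edgeFinset ≤ turanEdges (Fintype.card V) r := by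
  rw [turanEdges, card_edgeFinset_turanGraph]
  exact hG.card_edgeFinset_le

end

theorem dag_edge_bound_turan_general {V : Type*} [Fintype V] (E : V → V → Prop) (n ℓ : ℕ)
    (hcard : Fintype.card V = n)
    (hmax : ¬∃ p : Fin (ℓ + 1 + 1) → V, IsDirPath E (ℓ + 1) p) :
    edgeCount E ≤ turanEdges n (ℓ + 1) := by
  classical
  obtain ⟨f, hf⟩ := exists_rank_lt_of_not_isDirPath hmax
  have hasymm : ∀ u v, E u v → ¬E v u := fun u v huv hvu => (hf u v huv).asymm (hf v u hvu)
  have hcol : (fromRel E).Colorable (ℓ + 1) := colorable_fromRel f fun u v huv => (hf u v huv).ne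
  rw [edgeCount_eq_card_edgeFinset_fromRel hasymm, ← hcard]
  exact (hcol.cliqueFree (Nat.lt_succ_self _)).card_edgeFinset_le_turanEdges

theorem dag_edge_bound_turan {V : Type*} [Fintype V] (E : V → V → Prop) (n ℓ : ℕ)
    (hcard : Fintype.card V = n)
    (hacyc : ∀ v : V, ¬Relation.TransGen E v v)
    (hmax : ¬∃ p : Fin (ℓ + 1 + 1) → V, IsDirPath E (ℓ + 1) p) :
    edgeCount E ≤ turanEdges n (ℓ + 1) :=
  dag_edge_bound_turan_general E n ℓ hcard hmax
end

section
/- For all natural numbers n and ℓ with ℓ + 1 ≤ n, there exists a relation E : Fin n → Fin n → Prop with no directed cycles (¬ Relation.TransGen E v v for every v), such that there is no directed path of length ℓ+1 in (Fin n, E), and the number of edges of (Fin n, E) equals t(n, ℓ+1), the number of edges of the Turán graph SimpleGraph.turanGraph n (ℓ+1). -/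
theorem dag_turan_bound_sharp (n ℓ : ℕ) (hn : ℓ + 1 ≤ n) :
    ∃ E : Fin n → Fin n → Prop,
      (∀ v : Fin n, ¬Relation.TransGen E v v) ∧
      (¬∃ p : Fin (ℓ + 1 + 1) → Fin n, IsDirPath E (ℓ + 1) p) ∧
      edgeCount E = turanEdges n (ℓ + 1) := by
  classical
  set r := ℓ + 1 with hr
  refine ⟨fun u v => (u : ℕ) % r < (v : ℕ) % r, ?_, ?_, ?_⟩
  · have key : ∀ a b : Fin n, Relation.TransGen (fun u v : Fin n => (u:ℕ) % r < (v:ℕ) % r) a b →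
        (a:ℕ) % r < (b:ℕ) % r := by
      intro a b h
      induction h with
      | single h => exact h
      | tail _ h ih => exact ih.trans h
    exact fun v h => lt_irrefl _ (key v v h)
  · rintro ⟨p, hp⟩
    have hmono : StrictMono fun i : Fin (ℓ + 1 + 1) =>
        (⟨(p i : ℕ) % r, Nat.mod_lt _ (Nat.succ_pos ℓ)⟩ : Fin r) := by
      apply Fin.strictMono_iff_lt_succ.2
      intro i
      exact hp i
    have := Fintype.card_le_of_injective _ hmono.injective
    simp only [Fintype.card_fin, hr] at this
    omega
  · have hadj : ∀ u v : Fin n, (SimpleGraph.turanGraph n r).Adj u v ↔ (u:ℕ) % r ≠ (v:ℕ) % r := by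
      intro u v; simp [SimpleGraph.turanGraph, Fin.ext_iff]
    have hsplit : (Finset.univ.filter fun p : Fin n × Fin n =>
          (SimpleGraph.turanGraph n r).Adj p.1 p.2)
        = (Finset.univ.filter fun p : Fin n × Fin n => (p.1:ℕ) % r < (p.2:ℕ) % r)
          ∪ (Finset.univ.filter fun p : Fin n × Fin n => (p.2:ℕ) % r < (p.1:ℕ) % r) := by
      rw [← Finset.filter_or]
      apply Finset.filter_congr
      intro p _
      rw [hadj]
      constructor
      · intro h; omega
      · intro h; omega
    have hdisj : Disjoint
        (Finset.univ.filter fun p : Fin n × Fin n => (p.1:ℕ) % r < (p.2:ℕ) % r)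
        (Finset.univ.filter fun p : Fin n × Fin n => (p.2:ℕ) % r < (p.1:ℕ) % r) := by
      rw [Finset.disjoint_left]
      intro p h1 h2
      simp only [Finset.mem_filter] at h1 h2
      omega
    have hswap : (Finset.univ.filter fun p : Fin n × Fin n => (p.2:ℕ) % r < (p.1:ℕ) % r).card
        = (Finset.univ.filter fun p : Fin n × Fin n => (p.1:ℕ) % r < (p.2:ℕ) % r).card := by
      apply Finset.card_bij (fun p _ => Prod.swap p)
      · intro p hp; simp only [Finset.mem_filter] at hp ⊢; exact ⟨Finset.mem_univ _, hp.2⟩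
      · intro p _ q _ h; exact Prod.swap_injective h
      · intro p hp
        simp only [Finset.mem_filter] at hp
        exact ⟨Prod.swap p, by simp only [Finset.mem_filter]; exact ⟨Finset.mem_univ _, hp.2⟩, by simp⟩
    have h2 : 2 * turanEdges n r = 2 * edgeCount (fun u v : Fin n => (u:ℕ) % r < (v:ℕ) % r) := by
      rw [turanEdges, SimpleGraph.two_mul_card_edgeFinset]
      have : edgeCount (fun u v : Fin n => (u:ℕ) % r < (v:ℕ) % r)
          = (Finset.univ.filter fun p : Fin n × Fin n => (p.1:ℕ) % r < (p.2:ℕ) % r).card := by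
        unfold edgeCount
        beta_reduce
        exact congrArg Finset.card (Finset.filter_congr_decidable _ _ _)
      rw [this]
      rw [show (Finset.univ.filter fun (x : Fin n × Fin n) => (SimpleGraph.turanGraph n r).Adj x.1 x.2)
          = (Finset.univ.filter fun p : Fin n × Fin n => (SimpleGraph.turanGraph n r).Adj p.1 p.2) from rfl]
      rw [hsplit, Finset.card_union_of_disjoint hdisj, hswap]
      ring
    omega
end

section
/- Let V be a finite type and E : V → V → Prop a relation with no directed cycles (¬ Relation.TransGen E v v for every v). The following are equivalent: (i) for every pair of vertices v, w and every pair of directed paths γ, γ' from v to w, there exists a directed path γ'' from v to w whose vertex set contains the vertex sets of both γ and γ'; (ii) for every pair of vertices v, w with w reachable from v (Relation.TransGen E v w), there is a directed path γ_M from v to w such that the vertex set of every directed path from v to w is contained in the vertex set of γ_M. -/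
lemma dirPath_transGen {V : Type*} {E : V → V → Prop} {k : ℕ} {p : Fin (k + 1) → V}
    (hp : IsDirPath E k p) : ∀ j i : Fin (k + 1), i < j → Relation.TransGen E (p i) (p j) := by
  intro j
  induction j using Fin.induction with
  | zero => intro i hi; exact absurd hi (by simp [Fin.lt_def])
  | succ j ih =>
    intro i hi
    have hle : i.val ≤ j.val := by
      have := hi
      simp [Fin.lt_def] at this
      omega
    rcases eq_or_lt_of_le hle with h | h
    · have : i = j.castSucc := Fin.ext (by simpa using h)
      rw [this]
      exact Relation.TransGen.single (hp j)
    · exact Relation.TransGen.tail (ih i (by simpa [Fin.lt_def] using h)) (hp j)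

lemma snoc_dirPath {V : Type*} {E : V → V → Prop} {k : ℕ} {p : Fin (k + 1) → V} {v u w : V}
    (h : IsDirPathFromTo E k p v u) (e : E u w) :
    IsDirPathFromTo E (k + 1) (Fin.snoc p w) v w := by
  obtain ⟨h0, hl, hp⟩ := h
  refine ⟨?_, by simp, ?_⟩
  · have : (0 : Fin (k + 2)) = Fin.castSucc 0 := rfl
    rw [this, Fin.snoc_castSucc, h0]
  · intro i
    induction i using Fin.lastCases with
    | last =>
      rw [Fin.succ_last]
      simp only [Fin.snoc_castSucc, Fin.snoc_last]
      rw [hl] at *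
      simpa using e
    | cast j =>
      rw [Fin.succ_castSucc]
      simp only [Fin.snoc_castSucc]
      exact hp j

lemma exists_dirPath {V : Type*} {E : V → V → Prop} {v w : V}
    (h : Relation.TransGen E v w) :
    ∃ (k : ℕ) (p : Fin (k + 1) → V), IsDirPathFromTo E k p v w := by
  induction h with
  | single e =>
    exact ⟨1, Fin.snoc (fun _ => v) _,
      snoc_dirPath ⟨rfl, rfl, fun i => absurd i.isLt (by omega)⟩ e⟩
  | tail _ e ih =>
    obtain ⟨k, p, hp⟩ := ih
    exact ⟨k + 1, _, snoc_dirPath hp e⟩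

theorem reduced_tfae_i_ii {V : Type*} [Fintype V] (E : V → V → Prop)
    (hacyc : ∀ v : V, ¬Relation.TransGen E v v) :
    (∀ (v w : V) (k k' : ℕ) (γ : Fin (k + 1) → V) (γ' : Fin (k' + 1) → V),
        IsDirPathFromTo E k γ v w → IsDirPathFromTo E k' γ' v w →
          ∃ (m : ℕ) (γ'' : Fin (m + 1) → V), IsDirPathFromTo E m γ'' v w ∧
            Set.range γ ⊆ Set.range γ'' ∧ Set.range γ' ⊆ Set.range γ'') ↔
    (∀ v w : V, Relation.TransGen E v w →
        ∃ (m : ℕ) (γM : Fin (m + 1) → V), IsDirPathFromTo E m γM v w ∧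
          ∀ (k : ℕ) (γ : Fin (k + 1) → V), IsDirPathFromTo E k γ v w →
            Set.range γ ⊆ Set.range γM) := by
  constructor
  · intro H v w hvw
    obtain ⟨k0, γ0, h0⟩ := exists_dirPath hvw
    set N : Set ℕ := {n | ∃ (k : ℕ) (γ : Fin (k + 1) → V),
      IsDirPathFromTo E k γ v w ∧ (Set.range γ).ncard = n} with hN
    have hNne : N.Nonempty := ⟨_, k0, γ0, h0, rfl⟩
    have hNbdd : BddAbove N := by
      refine ⟨Fintype.card V, ?_⟩
      rintro n ⟨k, γ, _, rfl⟩
      calc (Set.range γ).ncard ≤ (Set.univ : Set V).ncard :=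
        Set.ncard_le_ncard (Set.subset_univ _) Set.finite_univ
        _ = Fintype.card V := by rw [Set.ncard_univ, Nat.card_eq_fintype_card]
    obtain ⟨m, γM, hM, hcard⟩ : ∃ (m : ℕ) (γM : Fin (m + 1) → V),
        IsDirPathFromTo E m γM v w ∧ (Set.range γM).ncard = sSup N :=
      Nat.sSup_mem hNne hNbdd
    refine ⟨m, γM, hM, ?_⟩
    intro k γ hγ
    obtain ⟨m', γ'', h'', hsub1, hsub2⟩ := H v w k m γ γM hγ hM
    have hle : (Set.range γ'').ncard ≤ (Set.range γM).ncard := by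
      rw [hcard]
      exact le_csSup hNbdd ⟨m', γ'', h'', rfl⟩
    have heq : Set.range γM = Set.range γ'' :=
      Set.eq_of_subset_of_ncard_le hsub2 hle (Set.toFinite _)
    rw [heq]
    exact hsub1
  · intro H v w k k' γ γ' hγ hγ'
    by_cases hvw : v = w
    · subst hvw
      have hk : k = 0 := by
        by_contra hk
        exact hacyc v (by
          have := dirPath_transGen hγ.2.2 (Fin.last k) 0
            (by simp [Fin.lt_def, Fin.pos_iff_ne_zero]; omega)
          rwa [hγ.1, hγ.2.1] at this)
      have hk' : k' = 0 := by
        by_contra hk'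
        exact hacyc v (by
          have := dirPath_transGen hγ'.2.2 (Fin.last k') 0
            (by simp [Fin.lt_def]; omega)
          rwa [hγ'.1, hγ'.2.1] at this)
      subst hk; subst hk'
      refine ⟨0, γ, hγ, le_refl _, ?_⟩
      rintro x ⟨i, rfl⟩
      have : i = 0 := Fin.fin_one_eq_zero i
      rw [this, hγ'.1, ← hγ.1]
      exact ⟨0, rfl⟩
    · have hk : k ≠ 0 := by
        rintro rfl
        exact hvw (by rw [← hγ.1, ← hγ.2.1]; rfl)
      have htrans : Relation.TransGen E v w := by
        have := dirPath_transGen hγ.2.2 (Fin.last k) 0 (by simp [Fin.lt_def]; omega)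
        rwa [hγ.1, hγ.2.1] at this
      obtain ⟨m, γM, hM, hall⟩ := H v w htrans
      exact ⟨m, γM, hM, hall k γ hγ, hall k' γ' hγ'⟩
end

section
/- Let V be a finite type and E : V → V → Prop a relation with no directed cycles (¬ Relation.TransGen E v v for every v). The following are equivalent: (ii) for every pair of vertices v, w with w reachable from v (Relation.TransGen E v w), there is a directed path γ_M from v to w such that the vertex set of every directed path from v to w is contained in the vertex set of γ_M; (iii) for every topological order f of (V,E) and every pair of vertices v, w with w reachable from v, the list consisting of all vertices that lie on some directed path from v to w, sorted in strictly increasing order of f, is a directed path from v to w (its first element is v, its last element is w, and consecutive elements are related by E). -/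
/-- A topological order of `(V, E)`: an injective map `f : V → ℕ` with `f u < f v`
whenever `E u v`. -/
def IsTopologicalOrder {V : Type*} (E : V → V → Prop) (f : V → ℕ) : Prop :=
  Function.Injective f ∧ ∀ u v : V, E u v → f u < f v

/-- `L` is the list of the elements of `S`, sorted in strictly increasing order of `f`. -/
def IsSortedListOf {V : Type*} (f : V → ℕ) (S : Set V) (L : List V) : Prop :=
  (∀ x : V, x ∈ L ↔ x ∈ S) ∧ L.Pairwise fun x y => f x < f y

/-- The list `L` is a directed path from `v` to `w`: its first element is `v`, its last
element is `w`, and consecutive elements are related by `E`. -/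
def IsDirPathList {V : Type*} (E : V → V → Prop) (v w : V) (L : List V) : Prop :=
  L.head? = some v ∧ L.getLast? = some w ∧ L.Chain' E

/-!
A path `γ_M` as in (ii) visits exactly the vertices lying on some path from `v` to `w`, and every
topological order increases along it, so `γ_M` is the sorted list of (iii). Conversely, a finite
DAG has a topological order (rank vertices by their number of ancestors and break ties
injectively); the sorted list that (iii) turns into a path then passes through every vertex of
every path from `v` to `w`.
-/

open Relation

section

variable {V : Type*}

def dirPathVertices (E : V → V → Prop) (v w : V) : Set V :=
  {x | ∃ (k : ℕ) (γ : Fin (k + 1) → V), IsDirPathFromTo E k γ v w ∧ x ∈ Set.range γ}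

theorem dirPathVertices_eq_range {E : V → V → Prop} {v w : V} {m : ℕ} {γM : Fin (m + 1) → V}
    (hγM : IsDirPathFromTo E m γM v w)
    (hmax : ∀ (k : ℕ) (γ : Fin (k + 1) → V), IsDirPathFromTo E k γ v w →
      Set.range γ ⊆ Set.range γM) :
    dirPathVertices E v w = Set.range γM :=
  Set.Subset.antisymm (fun _ ⟨k, γ, hγ, hx⟩ => hmax k γ hγ hx) fun _ hx => ⟨m, γM, hγM, hx⟩

theorem isDirPathList_ofFn_iff {E : V → V → Prop} {v w : V} {k : ℕ} {γ : Fin (k + 1) → V} :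
    IsDirPathList E v w (List.ofFn γ) ↔ IsDirPathFromTo E k γ v w := by
  have hhead : (List.ofFn γ).head? = some (γ 0) := by simp [List.ofFn_succ]
  have hlast : (List.ofFn γ).getLast? = some (γ (Fin.last k)) := by
    rw [List.ofFn_succ']; simp
  have hchain : (List.ofFn γ).IsChain E ↔ IsDirPath E k γ :=
    List.isChain_ofFn.trans ⟨fun h i => h i (by omega), fun h i hi => h ⟨i, by omega⟩⟩
  simp only [IsDirPathList, IsDirPathFromTo, hhead, hlast, Option.some_inj]
  exact and_congr Iff.rfl (and_congr Iff.rfl hchain)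

theorem IsDirPathList.exists_ofFn_eq {E : V → V → Prop} {v w : V} {L : List V}
    (hL : IsDirPathList E v w L) :
    ∃ (m : ℕ) (γ : Fin (m + 1) → V), IsDirPathFromTo E m γ v w ∧ List.ofFn γ = L := by
  obtain ⟨t, rfl⟩ := List.head?_eq_some_iff.1 hL.1
  have hofFn : List.ofFn (fun i : Fin (v :: t).length => (v :: t)[(i : ℕ)]) = v :: t :=
    List.ofFn_getElem
  exact ⟨t.length, _, isDirPathList_ofFn_iff.1 (hofFn.symm ▸ hL), hofFn⟩

theorem IsDirPath.pairwise_ofFn {E : V → V → Prop} {f : V → ℕ} (hf : ∀ u v, E u v → f u < f v)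
    {k : ℕ} {γ : Fin (k + 1) → V} (hγ : IsDirPath E k γ) :
    (List.ofFn γ).Pairwise fun x y => f x < f y := by
  have hmono : StrictMono (f ∘ γ) := Fin.strictMono_iff_lt_succ.2 fun i => hf _ _ (hγ i)
  exact List.pairwise_ofFn.2 fun _ _ hij => hmono hij

theorem IsSortedListOf.eq {f : V → ℕ} {S : Set V} {L L' : List V} (hL : IsSortedListOf f S L)
    (hL' : IsSortedListOf f S L') : L = L' := by
  have nodup {l : List V} (h : l.Pairwise fun x y => f x < f y) : l.Nodup :=
    h.imp fun hxy => ne_of_apply_ne f hxy.ne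
  refine List.Perm.eq_of_pairwise (fun _ _ _ _ hxy hyx => absurd (hxy.trans hyx) (lt_irrefl _))
    hL.2 hL'.2 ?_
  exact (List.perm_ext_iff_of_nodup (nodup hL.2) (nodup hL'.2)).2 fun x =>
    (hL.1 x).trans (hL'.1 x).symm

theorem exists_isSortedListOf {f : V → ℕ} (hf : f.Injective) {S : Set V} (hS : S.Finite) :
    ∃ L, IsSortedListOf f S L := by
  classical
  let L := hS.toFinset.toList.mergeSort fun x y => f x ≤ f y
  have hle : L.Pairwise fun x y => f x ≤ f y := by
    simpa using List.pairwise_mergeSort (le := fun x y => decide (f x ≤ f y))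
      (by simpa using fun _ _ _ => le_trans) (by simpa using fun _ _ => le_total _ _) _
  have hnodup : L.Nodup := (List.mergeSort_perm _ _).nodup_iff.2 (Finset.nodup_toList _)
  exact ⟨L, fun x => by simp [L, List.mem_mergeSort],
    (hle.and hnodup).imp fun h => h.1.lt_of_ne (hf.ne h.2)⟩

theorem exists_injective_refining_rank [Finite V] (r : V → ℕ) :
    ∃ f : V → ℕ, f.Injective ∧ ∀ a b, r a < r b → f a < f b := by
  obtain ⟨n, ⟨e⟩⟩ := Finite.exists_equiv_fin V
  -- order lexicographically by rank, then by the enumeration `e`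
  refine ⟨fun x => n * r x + e x, fun x y hxy => e.injective (Fin.ext ?_), fun a b hab => ?_⟩
  · simpa [Nat.mul_add_mod, Nat.mod_eq_of_lt] using congrArg (· % n) hxy
  · calc n * r a + e a < n * (r a + 1) := by have := (e a).isLt; rw [Nat.mul_succ]; omega
      _ ≤ n * r b := Nat.mul_le_mul_left n hab
      _ ≤ n * r b + e b := Nat.le_add_right _ _

theorem ncard_ancestors_lt [Finite V] {E : V → V → Prop} (hacyc : ∀ v, ¬TransGen E v v)
    {a b : V} (hab : TransGen E a b) :
    {u | TransGen E u a}.ncard < {u | TransGen E u b}.ncard :=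
  Set.ncard_lt_ncard ⟨fun _ hu => hu.trans hab, fun hsub => hacyc a (hsub hab)⟩

theorem exists_isTopologicalOrder [Finite V] {E : V → V → Prop}
    (hacyc : ∀ v, ¬TransGen E v v) : ∃ f, IsTopologicalOrder E f := by
  obtain ⟨f, hinj, hlt⟩ := exists_injective_refining_rank fun x => {u | TransGen E u x}.ncard
  exact ⟨f, hinj, fun a b hab => hlt a b (ncard_ancestors_lt hacyc (.single hab))⟩

end

theorem reduced_tfae_ii_iii {V : Type*} [Fintype V] (E : V → V → Prop)
    (hacyc : ∀ v : V, ¬Relation.TransGen E v v) :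
    (∀ v w : V, Relation.TransGen E v w →
        ∃ (m : ℕ) (γM : Fin (m + 1) → V), IsDirPathFromTo E m γM v w ∧
          ∀ (k : ℕ) (γ : Fin (k + 1) → V), IsDirPathFromTo E k γ v w →
            Set.range γ ⊆ Set.range γM) ↔
    (∀ f : V → ℕ, IsTopologicalOrder E f → ∀ v w : V, Relation.TransGen E v w →
        ∀ L : List V,
          IsSortedListOf f {x : V | ∃ (k : ℕ) (γ : Fin (k + 1) → V),
            IsDirPathFromTo E k γ v w ∧ x ∈ Set.range γ} L →
          IsDirPathList E v w L) := by
  constructor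
  · rintro hmax f hf v w hvw L hL
    obtain ⟨m, γM, hγM, hsub⟩ := hmax v w hvw
    have hsorted : IsSortedListOf f (dirPathVertices E v w) (List.ofFn γM) :=
      ⟨fun x => by rw [List.mem_ofFn', dirPathVertices_eq_range hγM hsub],
        hγM.2.2.pairwise_ofFn hf.2⟩
    rw [IsSortedListOf.eq hL hsorted]
    exact isDirPathList_ofFn_iff.2 hγM
  · intro hsort v w hvw
    obtain ⟨f, hf⟩ := exists_isTopologicalOrder hacyc
    obtain ⟨L, hL⟩ := exists_isSortedListOf hf.1 (Set.toFinite (dirPathVertices E v w))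
    obtain ⟨m, γM, hγM, rfl⟩ := (hsort f hf v w hvw L hL).exists_ofFn_eq
    refine ⟨m, γM, hγM, fun k γ hγ x hx => ?_⟩
    rw [← List.mem_ofFn', hL.1]
    exact ⟨k, γ, hγ, hx⟩
end

section
/- Let V be a finite type and E : V → V → Prop a relation with no directed cycles (¬ Relation.TransGen E v v for every v). If E is extremely reduced, then E is strongly reduced. -/
/-- `E` is strongly reduced: for every topological order `f`, every pair of vertices `v, w`
and every two directed paths `γ, γ'` from `v` to `w`, the list of vertices of the union of
the vertex sets of `γ` and `γ'`, sorted in strictly increasing order of `f`, is a directed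
path from `v` to `w`. -/
def StronglyReduced {V : Type*} (E : V → V → Prop) : Prop :=
  ∀ f : V → ℕ, IsTopologicalOrder E f →
    ∀ (v w : V) (k k' : ℕ) (γ : Fin (k + 1) → V) (γ' : Fin (k' + 1) → V),
      IsDirPathFromTo E k γ v w → IsDirPathFromTo E k' γ' v w →
        ∀ L : List V, IsSortedListOf f (Set.range γ ∪ Set.range γ') L →
          IsDirPathList E v w L

/-- `E` is extremely reduced: any two non-adjacent vertices with a common ancestor have no
common descendant. -/
def ExtremelyReduced {V : Type*} (E : V → V → Prop) : Prop :=
  ∀ x y : V, ¬E x y → ¬E y x →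
    (∃ a : V, Relation.TransGen E a x ∧ Relation.TransGen E a y) →
      ¬∃ b : V, Relation.TransGen E x b ∧ Relation.TransGen E y b

namespace List

variable {α : Type*} {R : α → α → Prop} {l : List α} {a : α}

theorem head?_eq_of_pairwise (hl : l.Pairwise R) (ha : a ∈ l) (hmin : ∀ b ∈ l, ¬R b a) :
    l.head? = some a := by
  obtain _ | ⟨b, t⟩ := l
  · simp at ha
  · obtain rfl | hat := mem_cons.mp ha
    · rfl
    · exact absurd ((pairwise_cons.mp hl).1 a hat) (hmin b mem_cons_self)

theorem getLast?_eq_of_pairwise (hl : l.Pairwise R) (ha : a ∈ l) (hmax : ∀ b ∈ l, ¬R a b) :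
    l.getLast? = some a := by
  rw [← head?_reverse]
  exact head?_eq_of_pairwise (pairwise_reverse.mpr hl) (mem_reverse.mpr ha)
    fun b hb => hmax b (mem_reverse.mp hb)

theorem mem_append_cons_cons_of_pairwise {l₁ l₂ : List α} {x y z : α}
    (hl : (l₁ ++ x :: y :: l₂).Pairwise R) (hz : z ∈ l₁ ++ x :: y :: l₂) :
    z = x ∨ z = y ∨ R z x ∨ R y z := by
  rw [pairwise_append, pairwise_cons, pairwise_cons] at hl
  simp only [mem_append, mem_cons] at hz
  obtain hz | rfl | rfl | hz := hz
  · exact .inr <| .inr <| .inl <| hl.2.2 z hz x mem_cons_self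
  · exact .inl rfl
  · exact .inr <| .inl rfl
  · exact .inr <| .inr <| .inr <| hl.2.1.2.1 z hz

end List

theorem Relation.ReflTransGen.transGen_of_ne {α : Type*} {r : α → α → Prop} {a b : α}
    (h : Relation.ReflTransGen r a b) (hne : a ≠ b) : Relation.TransGen r a b :=
  (Relation.reflTransGen_iff_eq_or_transGen.mp h).resolve_left hne.symm

section

variable {V : Type*} {E : V → V → Prop}

theorem lt_of_transGen {α : Type*} [Preorder α] {f : V → α} (hf : ∀ a b, E a b → f a < f b)
    {a b : V} (h : Relation.TransGen E a b) : f a < f b := by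
  induction h with
  | single h => exact hf _ _ h
  | tail _ h ih => exact ih.trans (hf _ _ h)

theorem le_of_reflTransGen {α : Type*} [Preorder α] {f : V → α}
    (hf : ∀ a b, E a b → f a < f b) {a b : V} (h : Relation.ReflTransGen E a b) : f a ≤ f b := by
  obtain rfl | h := Relation.reflTransGen_iff_eq_or_transGen.mp h
  · exact le_rfl
  · exact (lt_of_transGen hf h).le

theorem IsDirPath.reflTransGen_of_le {k : ℕ} {p : Fin (k + 1) → V} (hp : IsDirPath E k p)
    {i j : Fin (k + 1)} (hij : i ≤ j) : Relation.ReflTransGen E (p i) (p j) := by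
  induction j using Fin.induction with
  | zero => rw [Fin.le_zero_iff.mp hij]
  | succ j ih =>
    obtain rfl | hij := hij.eq_or_lt
    · exact .refl
    · exact (ih (Fin.le_castSucc_iff.mpr hij)).tail (hp j)

/-- The properties of the vertex set of a union of directed `v`–`w` paths that the sorting
argument uses. -/
structure IsPathUnion (E : V → V → Prop) (v w : V) (S : Set V) : Prop where
  start_mem : v ∈ S
  end_mem : w ∈ S
  reflTransGen_start : ∀ x ∈ S, Relation.ReflTransGen E v x
  reflTransGen_end : ∀ x ∈ S, Relation.ReflTransGen E x w
  exists_pred : ∀ x ∈ S, x ≠ v → ∃ z ∈ S, E z x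
  exists_succ : ∀ x ∈ S, x ≠ w → ∃ u ∈ S, E x u

theorem IsDirPathFromTo.isPathUnion {k : ℕ} {p : Fin (k + 1) → V} {v w : V}
    (hp : IsDirPathFromTo E k p v w) : IsPathUnion E v w (Set.range p) := by
  obtain ⟨rfl, rfl, hp⟩ := hp
  refine ⟨⟨0, rfl⟩, ⟨Fin.last k, rfl⟩, ?_, ?_, ?_, ?_⟩
  · rintro _ ⟨i, rfl⟩
    exact hp.reflTransGen_of_le (Fin.zero_le i)
  · rintro _ ⟨i, rfl⟩
    exact hp.reflTransGen_of_le (Fin.le_last i)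
  · rintro _ ⟨i, rfl⟩ hi
    induction i using Fin.cases with
    | zero => exact absurd rfl hi
    | succ j => exact ⟨p j.castSucc, ⟨_, rfl⟩, hp j⟩
  · rintro _ ⟨i, rfl⟩ hi
    induction i using Fin.lastCases with
    | last => exact absurd rfl hi
    | cast j => exact ⟨p j.succ, ⟨_, rfl⟩, hp j⟩

theorem IsPathUnion.union {v w : V} {S T : Set V} (hS : IsPathUnion E v w S)
    (hT : IsPathUnion E v w T) : IsPathUnion E v w (S ∪ T) where
  start_mem := .inl hS.start_mem
  end_mem := .inl hS.end_mem
  reflTransGen_start _ hx := hx.elim (hS.reflTransGen_start _) (hT.reflTransGen_start _)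
  reflTransGen_end _ hx := hx.elim (hS.reflTransGen_end _) (hT.reflTransGen_end _)
  exists_pred x hx hxv := hx.elim
    (fun hx => (hS.exists_pred x hx hxv).imp fun _ ⟨hz, h⟩ => ⟨.inl hz, h⟩)
    (fun hx => (hT.exists_pred x hx hxv).imp fun _ ⟨hz, h⟩ => ⟨.inr hz, h⟩)
  exists_succ x hx hxw := hx.elim
    (fun hx => (hS.exists_succ x hx hxw).imp fun _ ⟨hu, h⟩ => ⟨.inl hu, h⟩)
    (fun hx => (hT.exists_succ x hx hxw).imp fun _ ⟨hu, h⟩ => ⟨.inr hu, h⟩)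

theorem IsPathUnion.rel_of_no_mem_between {α : Type*} [Preorder α] (her : ExtremelyReduced E)
    {f : V → α} (hf : ∀ a b, E a b → f a < f b) {v w x y : V} {S : Set V}
    (hS : IsPathUnion E v w S) (hx : x ∈ S) (hy : y ∈ S) (hxy : f x < f y)
    (hgap : ∀ z ∈ S, z = x ∨ z = y ∨ f z < f x ∨ f y < f z) : E x y := by
  by_contra hnxy
  have hyv : y ≠ v := by
    rintro rfl; exact (le_of_reflTransGen hf (hS.reflTransGen_start x hx)).not_gt hxy
  have hxw : x ≠ w := by
    rintro rfl; exact (le_of_reflTransGen hf (hS.reflTransGen_end y hy)).not_gt hxy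
  by_cases hxv : x = v
  · subst hxv
    obtain ⟨z, hz, hzy⟩ := hS.exists_pred y hy hyv
    have hzx := le_of_reflTransGen hf (hS.reflTransGen_start z hz)
    have hzy' := hf _ _ hzy
    obtain rfl | rfl | h | h := hgap z hz
    · exact hnxy hzy
    all_goals order
  by_cases hyw : y = w
  · subst hyw
    obtain ⟨u, hu, hxu⟩ := hS.exists_succ x hx hxw
    have huy := le_of_reflTransGen hf (hS.reflTransGen_end u hu)
    have hxu' := hf _ _ hxu
    obtain rfl | rfl | h | h := hgap u hu
    · order
    · exact hnxy hxu
    all_goals order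
  refine her x y hnxy (fun h => (hf _ _ h).not_gt hxy) ⟨v, ?_, ?_⟩ ⟨w, ?_, ?_⟩
  · exact (hS.reflTransGen_start x hx).transGen_of_ne (Ne.symm hxv)
  · exact (hS.reflTransGen_start y hy).transGen_of_ne (Ne.symm hyv)
  · exact (hS.reflTransGen_end x hx).transGen_of_ne hxw
  · exact (hS.reflTransGen_end y hy).transGen_of_ne hyw

theorem IsPathUnion.isDirPathList (her : ExtremelyReduced E) {f : V → ℕ}
    (hf : ∀ a b, E a b → f a < f b) {v w : V} {S : Set V} (hS : IsPathUnion E v w S)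
    {L : List V} (hL : IsSortedListOf f S L) : IsDirPathList E v w L := by
  obtain ⟨hmem, hsort⟩ := hL
  refine ⟨?_, ?_, ?_⟩
  · refine L.head?_eq_of_pairwise hsort ((hmem v).mpr hS.start_mem) fun x hx => ?_
    exact (le_of_reflTransGen hf (hS.reflTransGen_start x ((hmem x).mp hx))).not_gt
  · refine L.getLast?_eq_of_pairwise hsort ((hmem w).mpr hS.end_mem) fun x hx => ?_
    exact (le_of_reflTransGen hf (hS.reflTransGen_end x ((hmem x).mp hx))).not_gt
  · refine List.isChain_iff_forall_rel_of_append_cons_cons.mpr fun x y l₁ l₂ hL => ?_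
    subst hL
    refine hS.rel_of_no_mem_between her hf ((hmem x).mp (by simp)) ((hmem y).mp (by simp))
      ?_ fun z hz => List.mem_append_cons_cons_of_pairwise hsort ((hmem z).mpr hz)
    exact List.rel_of_pairwise_cons (List.pairwise_append.mp hsort).2.1 List.mem_cons_self

end

theorem extremelyReduced_imp_stronglyReduced_general {V : Type*} (E : V → V → Prop)
    (her : ExtremelyReduced E) : StronglyReduced E :=
  fun _ hf _ _ _ _ _ _ hγ hγ' _ hL =>
    (hγ.isPathUnion.union hγ'.isPathUnion).isDirPathList her hf.2 hL

theorem extremelyReduced_imp_stronglyReduced {V : Type*} [Fintype V] (E : V → V → Prop)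
    (hacyc : ∀ v : V, ¬Relation.TransGen E v v)
    (her : ExtremelyReduced E) : StronglyReduced E :=
  extremelyReduced_imp_stronglyReduced_general E her
end

section
/- Let V be a finite type and E : V → V → Prop a relation with no directed cycles (¬ Relation.TransGen E v v for every v). If E is reduced, then the transitive closure Relation.TransGen E (which is also a finite DAG on V) is reduced. -/
/-- `E` is reduced: for every pair of vertices `v, w` with `w` reachable from `v`, there is
a directed path from `v` to `w` whose vertex set contains the vertex set of every directed
path from `v` to `w`. -/
def Reduced {V : Type*} (E : V → V → Prop) : Prop :=
  ∀ v w : V, Relation.TransGen E v w →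
    ∃ (m : ℕ) (γM : Fin (m + 1) → V), IsDirPathFromTo E m γM v w ∧
      ∀ (k : ℕ) (γ : Fin (k + 1) → V), IsDirPathFromTo E k γ v w →
        Set.range γ ⊆ Set.range γM

/-! Expanding every step of a `TransGen E`-path into an `E`-chain gives an `E`-path through all
of its vertices, which the maximal `E`-path from `v` to `w` then covers; and the maximal `E`-path
is itself a `TransGen E`-path. -/

open Relation

namespace IsDirPathFromTo

variable {V : Type*} {R S : V → V → Prop} {k : ℕ} {v w : V}

theorem mono {γ : Fin (k + 1) → V} (hRS : ∀ a b, R a b → S a b)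
    (h : IsDirPathFromTo R k γ v w) : IsDirPathFromTo S k γ v w :=
  ⟨h.1, h.2.1, fun i ↦ hRS _ _ (h.2.2 i)⟩

theorem of_isChain {l : List V} (h : (v :: l).IsChain R) :
    IsDirPathFromTo R l.length (fun i ↦ (v :: l)[i]) v ((v :: l).getLast (List.cons_ne_nil v l)) :=
  ⟨rfl, by simp [List.getLast_eq_getElem], fun i ↦ List.isChain_iff_getElem.mp h i (by simp)⟩

theorem init {γ : Fin (k + 2) → V} (h : IsDirPathFromTo R (k + 1) γ v w) :
    IsDirPathFromTo R k (Fin.init γ) v (γ (Fin.last k).castSucc) :=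
  ⟨h.1, rfl, fun i ↦ by simpa [Fin.init] using h.2.2 i.castSucc⟩

theorem exists_isChain_of_transGen {γ : Fin (k + 1) → V}
    (h : IsDirPathFromTo (TransGen R) k γ v w) :
    ∃ l : List V, (v :: l).IsChain R ∧ (v :: l).getLast (List.cons_ne_nil v l) = w ∧
      ∀ i, γ i ∈ v :: l := by
  induction k generalizing w with
  | zero =>
    obtain ⟨rfl, rfl, -⟩ := h
    exact ⟨[], .singleton _, rfl, fun i ↦ by simp [Fin.fin_one_eq_zero i]⟩
  | succ k ih =>
    obtain ⟨l₁, hchain₁, hlast₁, hγ₁⟩ := ih h.init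
    obtain ⟨c, huc, hcw⟩ := TransGen.head'_iff.mp (h.2.2 (Fin.last k))
    obtain ⟨l₂, hchain₂, hlast₂⟩ := List.exists_isChain_cons_of_relationReflTransGen hcw
    have hlast : (c :: l₂).getLast (List.cons_ne_nil c l₂) = w := hlast₂.trans h.2.1
    refine ⟨l₁ ++ c :: l₂, ?_, ?_, fun i ↦ ?_⟩
    · refine List.IsChain.append (l₁ := v :: l₁) hchain₁ hchain₂ ?_
      simp [List.getLast?_eq_some_getLast, hlast₁, huc]
    · exact (List.getLast_append_of_ne_nil (l := v :: l₁) _ (List.cons_ne_nil c l₂)).trans hlast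
    · induction i using Fin.lastCases with
      | last => exact List.mem_append_right (v :: l₁) (h.2.1 ▸ hlast ▸ List.getLast_mem _)
      | cast i => exact List.mem_append_left (c :: l₂) (hγ₁ i)

theorem exists_refinement_of_transGen {γ : Fin (k + 1) → V}
    (h : IsDirPathFromTo (TransGen R) k γ v w) :
    ∃ (n : ℕ) (p : Fin (n + 1) → V), IsDirPathFromTo R n p v w ∧ Set.range γ ⊆ Set.range p := by
  obtain ⟨l, hchain, hlast, hγ⟩ := h.exists_isChain_of_transGen
  refine ⟨l.length, _, hlast ▸ of_isChain hchain, ?_⟩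
  rintro _ ⟨i, rfl⟩
  obtain ⟨j, hj, hγj⟩ := List.getElem_of_mem (hγ i)
  exact ⟨⟨j, hj⟩, hγj⟩

end IsDirPathFromTo

theorem reduced_transClosure_general {V : Type*} (E : V → V → Prop)
    (hred : Reduced E) : Reduced (Relation.TransGen E) := by
  intro v w hvw
  obtain ⟨m, γM, hM, hmax⟩ := hred v w (transGen_eq_self (r := TransGen E) ▸ hvw)
  refine ⟨m, γM, hM.mono fun _ _ ↦ TransGen.single, fun k γ hγ ↦ ?_⟩
  obtain ⟨n, p, hp, hγp⟩ := hγ.exists_refinement_of_transGen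
  exact hγp.trans (hmax n p hp)

theorem reduced_transClosure {V : Type*} [Fintype V] (E : V → V → Prop)
    (hacyc : ∀ v : V, ¬Relation.TransGen E v v)
    (hred : Reduced E) : Reduced (Relation.TransGen E) :=
  reduced_transClosure_general E hred
end

section
/- For all natural numbers n, d with 1 ≤ d and d ≤ n, the number of edges of the Turán graph SimpleGraph.turanGraph (n+d) d equals the number of edges of SimpleGraph.turanGraph n d plus (d−1)·n + C(d, 2). -/
theorem turanEdges_add_general (n d : ℕ) :
    turanEdges (n + d) d = turanEdges n d + (d - 1) * n + Nat.choose d 2 := by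
  rw [turanEdges, turanEdges, SimpleGraph.card_edgeFinset_turanGraph_add, Nat.mul_comm n]

theorem turanEdges_add (n d : ℕ) (hd : 1 ≤ d) (hdn : d ≤ n) :
    turanEdges (n + d) d = turanEdges n d + (d - 1) * n + Nat.choose d 2 :=
  turanEdges_add_general n d
end

section
/- Let V be a finite type with Fintype.card V = n and E : V → V → Prop a relation with no directed cycles (¬ Relation.TransGen E v v for every v). Suppose the longest directed path in (V,E) has length ℓ with ℓ ≥ 1 (there exists a directed path of length ℓ and no directed path of length ℓ+1). If E is reduced, then the number of edges of (V,E) is at most t(n−ℓ+1, 2) + T(n, ℓ, 1), where t(m, 2) is the number of edges of SimpleGraph.turanGraph m 2 and T(n, ℓ, 1) := C(n, 2) − C(n−ℓ+1, 2). -/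
/-- `T(n, ℓ, 1) = C(n, 2) - C(n - ℓ + 1, 2)` (truncated subtraction in `ℕ`). -/
def intervalTuran (n ℓ : ℕ) : ℕ := Nat.choose n 2 - Nat.choose (n - ℓ + 1) 2

/-!
Induction on the number `n` of vertices. Take a source `s` and a sink `z`. Every `a` with
`s → a → z` lies on the maximal path from `s` to `z`, which has at most `ℓ + 1` vertices, so
`outdeg s + indeg z ≤ n + ℓ - 1` and one of the two has degree at most `n - ⌈(n - ℓ + 1) / 2⌉`,
which is exactly the increment of the bound from `n - 1` to `n`. Deleting a sink or a source
keeps the graph reduced, since no path between two other vertices passes through it.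
-/

open Finset Relation

section

variable {V : Type*} {E : V → V → Prop}

namespace IsDirPath

variable {k : ℕ} {p : Fin (k + 1) → V}

lemma reflTransGen_zero (hp : IsDirPath E k p) (i : Fin (k + 1)) :
    ReflTransGen E (p 0) (p i) := by
  induction i using Fin.induction with
  | zero => exact .refl
  | succ i ih => exact ih.tail (hp i)

lemma reflTransGen_last (hp : IsDirPath E k p) (i : Fin (k + 1)) :
    ReflTransGen E (p i) (p (Fin.last k)) := by
  induction i using Fin.reverseInduction with
  | last => exact .refl
  | cast i ih => exact .head (hp i) ih

lemma castLE (hp : IsDirPath E k p) {j : ℕ} (hj : j ≤ k) :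
    IsDirPath E j (p ∘ Fin.castLE (Nat.succ_le_succ hj)) :=
  fun i => hp (Fin.castLE hj i)

lemma le_of_not_exists {ℓ : ℕ} (hmax : ¬∃ q : Fin (ℓ + 1 + 1) → V, IsDirPath E (ℓ + 1) q)
    (hp : IsDirPath E k p) : k ≤ ℓ := by
  by_contra! h
  exact hmax ⟨_, hp.castLE h⟩

end IsDirPath

lemma isDirPathFromTo_two {u v w : V} (huv : E u v) (hvw : E v w) :
    IsDirPathFromTo E 2 ![u, v, w] u w :=
  ⟨rfl, rfl, by intro i; fin_cases i <;> assumption⟩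

section Subrel

variable {P : V → Prop}

lemma transGen_of_transGen_subrel {a b : Subtype P} (h : TransGen (Subrel E P) a b) :
    TransGen E a b :=
  TransGen.lift Subtype.val (fun _ _ h => h) _ _ h

lemma not_exists_isDirPath_subrel {k : ℕ} (h : ¬∃ p : Fin (k + 1) → V, IsDirPath E k p) :
    ¬∃ p : Fin (k + 1) → Subtype P, IsDirPath (Subrel E P) k p :=
  fun ⟨p, hp⟩ => h ⟨Subtype.val ∘ p, hp⟩

lemma Reduced.subrel (hred : Reduced E)
    (hP : ∀ v w k (p : Fin (k + 1) → V), P v → P w → IsDirPathFromTo E k p v w → ∀ i, P (p i)) :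
    Reduced (Subrel E P) := by
  intro v w hvw
  obtain ⟨m, γ, hγ, hγmax⟩ := hred v w (transGen_of_transGen_subrel hvw)
  refine ⟨m, fun i => ⟨γ i, hP _ _ _ _ v.2 w.2 hγ i⟩,
    ⟨Subtype.ext hγ.1, Subtype.ext hγ.2.1, hγ.2.2⟩, ?_⟩
  rintro k δ ⟨hδ0, hδl, hδ⟩ _ ⟨i, rfl⟩
  obtain ⟨j, hj⟩ := hγmax k (Subtype.val ∘ δ) ⟨congrArg _ hδ0, congrArg _ hδl, hδ⟩ ⟨i, rfl⟩
  exact ⟨j, Subtype.ext hj⟩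

end Subrel

lemma IsDirPathFromTo.ne_of_sink_or_source {z v w : V} (hz : (∀ u, ¬E z u) ∨ ∀ u, ¬E u z)
    (hv : v ≠ z) (hw : w ≠ z) {k : ℕ} {p : Fin (k + 1) → V} (hp : IsDirPathFromTo E k p v w)
    (i : Fin (k + 1)) : p i ≠ z := by
  obtain ⟨rfl, rfl, hp⟩ := hp
  rintro rfl
  rcases hz with hsink | hsource
  · rcases (hp.reflTransGen_last i).cases_head with h | ⟨u, hu, -⟩
    exacts [hw h.symm, hsink u hu]
  · rcases (hp.reflTransGen_zero i).cases_tail with h | ⟨u, -, hu⟩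
    exacts [hv h.symm, hsource u hu]

section Finite

lemma exists_source [Finite V] [Nonempty V] (hacyc : ∀ v : V, ¬TransGen E v v) :
    ∃ s, ∀ u, ¬E u s := by
  have : Std.Irrefl (TransGen E) := ⟨hacyc⟩
  obtain ⟨s, -, hs⟩ :=
    (Finite.wellFounded_of_trans_of_irrefl (TransGen E)).has_min Set.univ Set.univ_nonempty
  exact ⟨s, fun u hu => hs u trivial (.single hu)⟩

lemma exists_sink [Finite V] [Nonempty V] (hacyc : ∀ v : V, ¬TransGen E v v) :
    ∃ z, ∀ w, ¬E z w :=
  exists_source (E := Function.swap E) fun v h => hacyc v (transGen_swap.1 h)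

variable [Fintype V]

lemma edgeCount_eq_sum [DecidableRel E] : edgeCount E = ∑ u, ∑ w, if E u w then 1 else 0 := by
  rw [edgeCount, filter_congr_decidable, card_filter, Fintype.sum_prod_type]

lemma edgeCount_eq_subrel_add [DecidableEq V] [DecidableRel E] {z : V} (hz : ¬E z z) :
    edgeCount E = edgeCount (Subrel E (· ≠ z)) + #{u | E u z} + #{w | E z w} := by
  classical
  simp only [edgeCount_eq_sum, card_filter, subrel_val,
    Fintype.sum_eq_add_sum_subtype_ne _ z, if_neg hz, Finset.sum_add_distrib]
  ring

variable [DecidableRel E] {ℓ : ℕ}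

lemma card_common_le (hacyc : ∀ v : V, ¬TransGen E v v)
    (hmax : ¬∃ p : Fin (ℓ + 1 + 1) → V, IsDirPath E (ℓ + 1) p) (hred : Reduced E) (s z : V) :
    #{a | E s a ∧ E a z} ≤ ℓ - 1 := by
  classical
  set F : Finset V := {a | E s a ∧ E a z}
  obtain hF | ⟨a, ha⟩ := F.eq_empty_or_nonempty
  · simp [hF]
  obtain ⟨hsa, haz⟩ := (mem_filter.1 ha).2
  obtain ⟨m, γ, ⟨hγ0, hγl, hγ⟩, hγmax⟩ := hred s z (.head hsa (.single haz))
  have hsz : s ≠ z := by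
    rintro rfl
    exact hacyc s (.head hsa (.single haz))
  have hsub : insert s (insert z F) ⊆ univ.image γ := by
    intro x hx
    simp only [mem_insert, mem_filter, mem_univ, true_and, F] at hx
    obtain ⟨j, hj⟩ : x ∈ Set.range γ := by
      rcases hx with rfl | rfl | ⟨hsx, hxz⟩
      exacts [⟨0, hγ0⟩, ⟨Fin.last m, hγl⟩, hγmax 2 _ (isDirPathFromTo_two hsx hxz) ⟨1, rfl⟩]
    exact mem_image.2 ⟨j, mem_univ _, hj⟩
  have hsF : s ∉ insert z F := by
    simp only [mem_insert, mem_filter, mem_univ, true_and, F, not_or]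
    exact ⟨hsz, fun h => hacyc s (.single h.1)⟩
  have hzF : z ∉ F := fun h => hacyc z (.single (mem_filter.1 h).2.2)
  have := (card_le_card hsub).trans card_image_le
  rw [card_insert_of_notMem hsF, card_insert_of_notMem hzF, card_univ, Fintype.card_fin] at this
  have := hγ.le_of_not_exists hmax
  omega

lemma exists_sink_or_source_card_le [Nonempty V] (hacyc : ∀ v : V, ¬TransGen E v v)
    (hℓ : 1 ≤ ℓ) (hmax : ¬∃ p : Fin (ℓ + 1 + 1) → V, IsDirPath E (ℓ + 1) p) (hred : Reduced E) :
    ∃ z, ((∀ u, ¬E z u) ∨ ∀ u, ¬E u z) ∧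
      #{u | E u z} + #{w | E z w} ≤ Fintype.card V - 1 ∧
      2 * (#{u | E u z} + #{w | E z w}) ≤ Fintype.card V + ℓ - 1 := by
  classical
  obtain ⟨z, hz⟩ := exists_sink hacyc
  obtain ⟨s, hs⟩ := exists_source hacyc
  have hz0 : #{w | E z w} = 0 := card_eq_zero.2 (filter_false_of_mem fun w _ => hz w)
  have hs0 : #{u | E u s} = 0 := card_eq_zero.2 (filter_false_of_mem fun u _ => hs u)
  have hzin : #{u | E u z} < Fintype.card V :=
    card_lt_univ_of_notMem (x := z) fun h => hacyc z (.single (mem_filter.1 h).2)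
  have hsout : #{w | E s w} < Fintype.card V :=
    card_lt_univ_of_notMem (x := s) fun h => hacyc s (.single (mem_filter.1 h).2)
  have hsum : #{w | E s w} + #{u | E u z} ≤ Fintype.card V + (ℓ - 1) := by
    rw [← card_union_add_card_inter, ← filter_and]
    exact add_le_add (card_le_univ _) (card_common_le hacyc hmax hred s z)
  by_cases h : #{u | E u z} ≤ #{w | E s w}
  · exact ⟨z, .inl hz, by omega⟩
  · exact ⟨s, .inr hs, by omega⟩

end Finite

lemma turanEdges_two_succ (m : ℕ) : turanEdges (m + 1) 2 = turanEdges m 2 + (m + 1) / 2 := by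
  induction m using Nat.twoStepInduction with
  | zero => simp [turanEdges, SimpleGraph.card_edgeFinset_turanGraph]
  | one => simp [turanEdges, SimpleGraph.card_edgeFinset_turanGraph]
  | more m ih₀ ih₁ =>
    have h := @SimpleGraph.card_edgeFinset_turanGraph_add (m + 1) 2
    have h' := @SimpleGraph.card_edgeFinset_turanGraph_add m 2
    rw [show m + 1 + 2 = m + 2 + 1 by ring, Nat.choose_self] at h
    rw [Nat.choose_self] at h'
    unfold turanEdges at *
    omega

lemma turanEdges_add_intervalTuran_add_le_succ {n ℓ d : ℕ} (hℓ : 1 ≤ ℓ) (hd : d ≤ n)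
    (h2d : 2 * d ≤ n + ℓ) :
    turanEdges (n - ℓ + 1) 2 + intervalTuran n ℓ + d ≤
      turanEdges (n + 1 - ℓ + 1) 2 + intervalTuran (n + 1) ℓ := by
  have choose_two_succ (m : ℕ) : (m + 1).choose 2 = m.choose 2 + m := by
    rw [Nat.choose_succ_succ, Nat.choose_one_right, add_comm]
  unfold intervalTuran
  rcases lt_or_ge n ℓ with h | h
  · rw [show n - ℓ = 0 by omega, show n + 1 - ℓ = 0 by omega, choose_two_succ n, zero_add,
      Nat.choose_eq_zero_of_lt one_lt_two]
    omega
  · obtain ⟨r, rfl⟩ : ∃ r, n = ℓ + r := ⟨n - ℓ, by omega⟩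
    rw [show ℓ + r + 1 - ℓ + 1 = r + 1 + 1 by omega, show ℓ + r - ℓ + 1 = r + 1 by omega,
      turanEdges_two_succ (r + 1), choose_two_succ (ℓ + r), choose_two_succ (r + 1)]
    have := Nat.choose_le_choose 2 (show r + 1 ≤ ℓ + r by omega)
    omega

theorem edgeCount_le_of_reduced [Fintype V] {ℓ : ℕ} (hacyc : ∀ v : V, ¬TransGen E v v)
    (hℓ : 1 ≤ ℓ) (hmax : ¬∃ p : Fin (ℓ + 1 + 1) → V, IsDirPath E (ℓ + 1) p) (hred : Reduced E) :
    edgeCount E ≤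
      turanEdges (Fintype.card V - ℓ + 1) 2 + intervalTuran (Fintype.card V) ℓ := by
  classical
  obtain ⟨n, hn⟩ : ∃ n, Fintype.card V = n := ⟨_, rfl⟩
  rw [hn]
  induction n generalizing V with
  | zero =>
    have : IsEmpty V := Fintype.card_eq_zero_iff.1 hn
    simp [edgeCount_eq_sum]
  | succ n ih =>
    have : Nonempty V := Fintype.card_pos_iff.1 (by omega)
    obtain ⟨z, hz, hd, h2d⟩ := exists_sink_or_source_card_le hacyc hℓ hmax hred
    have hrest := ih (E := Subrel E (· ≠ z)) (fun v h => hacyc v (transGen_of_transGen_subrel h))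
      (not_exists_isDirPath_subrel hmax)
      (hred.subrel fun _ _ _ _ hv hw hp => hp.ne_of_sink_or_source hz hv hw) (by simp [hn])
    rw [hn] at hd h2d
    have hstep := turanEdges_add_intervalTuran_add_le_succ (n := n)
      (d := #{u | E u z} + #{w | E z w}) hℓ (by omega) (by omega)
    rw [edgeCount_eq_subrel_add fun h => hacyc z (.single h)]
    omega

end

theorem reduced_edge_bound_general {V : Type*} [Fintype V] (E : V → V → Prop) (n ℓ : ℕ)
    (hcard : Fintype.card V = n)
    (hacyc : ∀ v : V, ¬Relation.TransGen E v v)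
    (hℓ : 1 ≤ ℓ)
    (hmax : ¬∃ p : Fin (ℓ + 1 + 1) → V, IsDirPath E (ℓ + 1) p)
    (hred : Reduced E) :
    edgeCount E ≤ turanEdges (n - ℓ + 1) 2 + intervalTuran n ℓ :=
  hcard ▸ edgeCount_le_of_reduced hacyc hℓ hmax hred

theorem reduced_edge_bound {V : Type*} [Fintype V] (E : V → V → Prop) (n ℓ : ℕ)
    (hcard : Fintype.card V = n)
    (hacyc : ∀ v : V, ¬Relation.TransGen E v v)
    (hℓ : 1 ≤ ℓ)
    (hlong : ∃ p : Fin (ℓ + 1) → V, IsDirPath E ℓ p)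
    (hmax : ¬∃ p : Fin (ℓ + 1 + 1) → V, IsDirPath E (ℓ + 1) p)
    (hred : Reduced E) :
    edgeCount E ≤ turanEdges (n - ℓ + 1) 2 + intervalTuran n ℓ :=
  reduced_edge_bound_general E n ℓ hcard hacyc hℓ hmax hred
end

section
/- Let ι be a finite type and a, b, c, d : ι → ℝ with a v ≤ b v and c v ≤ d v for all v, and for v ∈ ι let R v := Set.Icc (a v) (b v) ×ˢ Set.Icc (c v) (d v) ⊆ ℝ × ℝ. Define E : ι → ι → Prop by E u v ↔ Set.Icc (a u) (b u) ⊂ Set.Icc (a v) (b v) and Set.Icc (c v) (d v) ⊂ Set.Icc (c u) (d u) (strict inclusions). If two indices x, y have a common ancestor (some s with Relation.TransGen E s x and Relation.TransGen E s y) and a common descendant (some t with Relation.TransGen E x t and Relation.TransGen E y t), then R x ∩ R y ≠ ∅. -/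
theorem boxes_common_ancestor_descendant_intersect {ι : Type*} [Fintype ι]
    (a b c d : ι → ℝ) (hab : ∀ v, a v ≤ b v) (hcd : ∀ v, c v ≤ d v)
    (R : ι → Set (ℝ × ℝ)) (hR : ∀ v, R v = Set.Icc (a v) (b v) ×ˢ Set.Icc (c v) (d v))
    (E : ι → ι → Prop)
    (hE : ∀ u v, E u v ↔
      Set.Icc (a u) (b u) ⊂ Set.Icc (a v) (b v) ∧
      Set.Icc (c v) (d v) ⊂ Set.Icc (c u) (d u))
    (x y : ι)
    (hanc : ∃ s : ι, Relation.TransGen E s x ∧ Relation.TransGen E s y)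
    (hdesc : ∃ t : ι, Relation.TransGen E x t ∧ Relation.TransGen E y t) :
    R x ∩ R y ≠ ∅ := by
  have key : ∀ u v, Relation.TransGen E u v →
      Set.Icc (a u) (b u) ⊆ Set.Icc (a v) (b v) ∧
      Set.Icc (c v) (d v) ⊆ Set.Icc (c u) (d u) := by
    intro u v h
    induction h with
    | single h => exact ⟨((hE _ _).1 h).1.subset, ((hE _ _).1 h).2.subset⟩
    | tail h₂ h₃ ih =>
      exact ⟨ih.1.trans ((hE _ _).1 h₃).1.subset, ((hE _ _).1 h₃).2.subset.trans ih.2⟩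
  obtain ⟨s, hsx, hsy⟩ := hanc
  obtain ⟨t, hxt, hyt⟩ := hdesc
  have hp : a s ∈ Set.Icc (a x) (b x) ∩ Set.Icc (a y) (b y) :=
    ⟨(key s x hsx).1 ⟨le_rfl, hab s⟩, (key s y hsy).1 ⟨le_rfl, hab s⟩⟩
  have hq : c t ∈ Set.Icc (c x) (d x) ∩ Set.Icc (c y) (d y) :=
    ⟨(key x t hxt).2 ⟨le_rfl, hcd t⟩, (key y t hyt).2 ⟨le_rfl, hcd t⟩⟩
  intro h
  have : (a s, c t) ∈ R x ∩ R y := by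
    rw [hR, hR]
    exact ⟨⟨hp.1, hq.1⟩, ⟨hp.2, hq.2⟩⟩
  rw [h] at this
  exact this
end
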